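/- arXiv:2308.08358 — 2 statements merged into one kernel-verified Lean document; each statement's English description precedes it below -/
import Mathlib

section
/- Suppose ‖A₁‖ ≤ R, ‖A₂‖ ≤ R, and let β > 0 be a constant such that α(z) ≥ β for all z ∈ ℝ^d with ‖z‖₂ ≤ R. Then for all x, y ∈ ℝ^d with ‖x‖₂ ≤ R and ‖y‖₂ ≤ R, |α(x)⁻¹ − α(y)⁻¹| ≤ R² β⁻² m √(nd) exp(R³) · ‖x − y‖₂. -/
open Matrix BigOperators

noncomputable section

/-- entrywise ReLU on a Euclidean vector -/
def relu {k : ℕ} (x : EuclideanSpace ℝ (Fin k)) : EuclideanSpace ℝ (Fin k) :=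
  WithLp.toLp 2 (fun i => max 0 (x i))

/-- entrywise exponential on a Euclidean vector -/
def vexp {k : ℕ} (x : EuclideanSpace ℝ (Fin k)) : EuclideanSpace ℝ (Fin k) :=
  WithLp.toLp 2 (fun i => Real.exp (x i))

/-- matrix-vector product as a map between Euclidean spaces -/
def mulE {k l : ℕ} (A : Matrix (Fin k) (Fin l) ℝ) (x : EuclideanSpace ℝ (Fin l)) :
    EuclideanSpace ℝ (Fin k) :=
  WithLp.toLp 2 (fun i => ∑ j, A i j * x j)

/-- ℓ²-operator norm of a matrix -/
def opNorm {k l : ℕ} (A : Matrix (Fin k) (Fin l) ℝ) : ℝ :=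
  ‖LinearMap.toContinuousLinearMap (Matrix.toEuclideanLin A)‖

/-- indicator of positivity, entrywise: the vector 1[y > 0] -/
def ind {k : ℕ} (y : EuclideanSpace ℝ (Fin k)) : Fin k → ℝ :=
  fun i => if 0 < y i then 1 else 0

variable {n m d : ℕ}

/-- h(x) = φ(A₁ x) -/
def hfun (A₁ : Matrix (Fin n) (Fin d) ℝ) (x : EuclideanSpace ℝ (Fin d)) :
    EuclideanSpace ℝ (Fin n) := relu (mulE A₁ x)

/-- u(x) = exp(A₂ φ(A₁ x)) -/
def ufun (A₁ : Matrix (Fin n) (Fin d) ℝ) (A₂ : Matrix (Fin m) (Fin n) ℝ)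
    (x : EuclideanSpace ℝ (Fin d)) : EuclideanSpace ℝ (Fin m) :=
  vexp (mulE A₂ (hfun A₁ x))

/-- α(x) = ⟨u(x), 1_m⟩ -/
def afun (A₁ : Matrix (Fin n) (Fin d) ℝ) (A₂ : Matrix (Fin m) (Fin n) ℝ)
    (x : EuclideanSpace ℝ (Fin d)) : ℝ :=
  ∑ i, ufun A₁ A₂ x i

/-- f(x) = α(x)⁻¹ • u(x) -/
def ffun (A₁ : Matrix (Fin n) (Fin d) ℝ) (A₂ : Matrix (Fin m) (Fin n) ℝ)
    (x : EuclideanSpace ℝ (Fin d)) : EuclideanSpace ℝ (Fin m) :=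
  (afun A₁ A₂ x)⁻¹ • ufun A₁ A₂ x

/-- c(x) = f(x) - b -/
def cfun (A₁ : Matrix (Fin n) (Fin d) ℝ) (A₂ : Matrix (Fin m) (Fin n) ℝ)
    (b : EuclideanSpace ℝ (Fin m)) (x : EuclideanSpace ℝ (Fin d)) :
    EuclideanSpace ℝ (Fin m) :=
  ffun A₁ A₂ x - b

/-- the matrix B(x) appearing in the decomposition of the Hessian -/
def Bmat (A₁ : Matrix (Fin n) (Fin d) ℝ) (A₂ : Matrix (Fin m) (Fin n) ℝ)
    (b : EuclideanSpace ℝ (Fin m)) (x : EuclideanSpace ℝ (Fin d)) :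
    Matrix (Fin m) (Fin m) ℝ :=
  Matrix.diagonal (fun i => ffun A₁ A₂ x i * (ffun A₁ A₂ x i + cfun A₁ A₂ b x i))
  - Matrix.diagonal (fun i => ffun A₁ A₂ x i)
      * Matrix.vecMulVec (fun i => cfun A₁ A₂ b x i + ffun A₁ A₂ x i) (fun i => ffun A₁ A₂ x i)
  - Matrix.vecMulVec (fun i => ffun A₁ A₂ x i) (fun i => cfun A₁ A₂ b x i + ffun A₁ A₂ x i)
      * Matrix.diagonal (fun i => ffun A₁ A₂ x i)
  + (∑ i, (2 * cfun A₁ A₂ b x i + ffun A₁ A₂ x i) * ffun A₁ A₂ x i)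
      • Matrix.vecMulVec (fun i => ffun A₁ A₂ x i) (fun i => ffun A₁ A₂ x i)
  - (∑ i, cfun A₁ A₂ b x i * ffun A₁ A₂ x i)
      • Matrix.diagonal (fun i => ffun A₁ A₂ x i)

lemma coord_abs_le_norm {k : ℕ} (v : EuclideanSpace ℝ (Fin k)) (i : Fin k) : |v i| ≤ ‖v‖ := by
  rw [EuclideanSpace.norm_eq, ← Real.sqrt_sq_eq_abs]
  apply Real.sqrt_le_sqrt
  have h : v i ^ 2 = ‖v i‖ ^ 2 := by rw [Real.norm_eq_abs, sq_abs]
  rw [h]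
  exact Finset.single_le_sum (fun j _ => sq_nonneg ‖v j‖) (Finset.mem_univ i)

lemma mulE_norm_le {k l : ℕ} (A : Matrix (Fin k) (Fin l) ℝ) (x : EuclideanSpace ℝ (Fin l)) :
    ‖mulE A x‖ ≤ opNorm A * ‖x‖ := by
  have h : mulE A x = (LinearMap.toContinuousLinearMap (Matrix.toEuclideanLin A)) x := by
    ext i
    simp [mulE, Matrix.toEuclideanLin_apply, Matrix.mulVec, dotProduct]
  rw [h]
  exact ContinuousLinearMap.le_opNorm _ x

lemma opNorm_nonneg {k l : ℕ} (A : Matrix (Fin k) (Fin l) ℝ) : 0 ≤ opNorm A :=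
  norm_nonneg _

lemma mulE_sub {k l : ℕ} (A : Matrix (Fin k) (Fin l) ℝ) (x y : EuclideanSpace ℝ (Fin l)) :
    mulE A x - mulE A y = mulE A (x - y) := by
  ext i
  show mulE A x i - mulE A y i = _
  simp only [mulE, WithLp.ofLp_toLp]
  rw [← Finset.sum_sub_distrib]
  apply Finset.sum_congr rfl
  intro j _
  show A i j * x j - A i j * y j = A i j * (x j - y j)
  ring

lemma relu_lip {k : ℕ} (a b : EuclideanSpace ℝ (Fin k)) : ‖relu a - relu b‖ ≤ ‖a - b‖ := by
  rw [EuclideanSpace.norm_eq, EuclideanSpace.norm_eq]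
  apply Real.sqrt_le_sqrt
  apply Finset.sum_le_sum
  intro i _
  have h1 : (relu a - relu b) i = max 0 (a i) - max 0 (b i) := rfl
  have h2 : (a - b) i = a i - b i := rfl
  rw [h1, h2, Real.norm_eq_abs, Real.norm_eq_abs]
  apply pow_le_pow_left₀ (abs_nonneg _)
  rw [max_comm 0 (a i), max_comm 0 (b i)]
  exact abs_max_sub_max_le_abs (a i) (b i) 0

lemma relu_norm_le {k : ℕ} (a : EuclideanSpace ℝ (Fin k)) : ‖relu a‖ ≤ ‖a‖ := by
  have := relu_lip a (0 : EuclideanSpace ℝ (Fin k))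
  have h0 : relu (0 : EuclideanSpace ℝ (Fin k)) = 0 := by
    ext i; simp [relu]
  simpa [h0] using this

lemma exp_sub_exp_le {a b c : ℝ} (hb : b ≤ a) (ha : a ≤ c) :
    Real.exp a - Real.exp b ≤ Real.exp c * (a - b) := by
  have h1 : Real.exp a - Real.exp b = Real.exp a * (1 - Real.exp (b - a)) := by
    rw [mul_sub, mul_one, ← Real.exp_add]; ring_nf
  rw [h1]
  have h2 : 1 - Real.exp (b - a) ≤ a - b := by
    have := Real.add_one_le_exp (b - a); linarith
  have h3 : 0 ≤ 1 - Real.exp (b - a) := by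
    have : Real.exp (b - a) ≤ 1 := Real.exp_le_one_iff.mpr (by linarith)
    linarith
  calc Real.exp a * (1 - Real.exp (b - a)) ≤ Real.exp c * (1 - Real.exp (b - a)) :=
        mul_le_mul_of_nonneg_right (Real.exp_le_exp.mpr ha) h3
    _ ≤ Real.exp c * (a - b) := mul_le_mul_of_nonneg_left h2 (Real.exp_pos c).le

lemma abs_exp_sub_exp_le {a b c : ℝ} (ha : |a| ≤ c) (hb : |b| ≤ c) :
    |Real.exp a - Real.exp b| ≤ Real.exp c * |a - b| := by
  rcases le_total b a with h | h
  · rw [abs_of_nonneg (by linarith [Real.exp_le_exp.mpr h] : (0:ℝ) ≤ Real.exp a - Real.exp b),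
      abs_of_nonneg (by linarith : (0:ℝ) ≤ a - b)]
    exact exp_sub_exp_le h (le_trans (le_abs_self a) ha)
  · rw [abs_sub_comm, abs_sub_comm a b,
      abs_of_nonneg (by linarith [Real.exp_le_exp.mpr h] : (0:ℝ) ≤ Real.exp b - Real.exp a),
      abs_of_nonneg (by linarith : (0:ℝ) ≤ b - a)]
    exact exp_sub_exp_le h (le_trans (le_abs_self b) hb)

/-- if ‖A₁‖ ≤ R, ‖A₂‖ ≤ R and β > 0 satisfies α(z) ≥ β on the
radius-R ball, then for all x, y in the ball,
|α(x)⁻¹ − α(y)⁻¹| ≤ R² β⁻² m √(nd) exp(R³) ‖x − y‖₂. -/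
theorem statement8 (n m d : ℕ) (hn : 0 < n) (hm : 0 < m) (hd : 0 < d) (R β : ℝ)
    (A₁ : Matrix (Fin n) (Fin d) ℝ) (A₂ : Matrix (Fin m) (Fin n) ℝ)
    (hA₁ : opNorm A₁ ≤ R) (hA₂ : opNorm A₂ ≤ R)
    (hβ : 0 < β)
    (hβle : ∀ z : EuclideanSpace ℝ (Fin d), ‖z‖ ≤ R → β ≤ afun A₁ A₂ z) :
    ∀ x y : EuclideanSpace ℝ (Fin d), ‖x‖ ≤ R → ‖y‖ ≤ R →
      |(afun A₁ A₂ x)⁻¹ - (afun A₁ A₂ y)⁻¹| ≤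
        R ^ 2 * (β ^ 2)⁻¹ * (m : ℝ) * Real.sqrt ((n : ℝ) * d) * Real.exp (R ^ 3)
          * ‖x - y‖ := by
  intro x y hx hy
  have hR : 0 ≤ R := le_trans (norm_nonneg x) hx
  set ax := afun A₁ A₂ x with hax_def
  set ay := afun A₁ A₂ y with hay_def
  have hax : β ≤ ax := hβle x hx
  have hay : β ≤ ay := hβle y hy
  have haxpos : 0 < ax := lt_of_lt_of_le hβ hax
  have haypos : 0 < ay := lt_of_lt_of_le hβ hay
  set vx := mulE A₂ (hfun A₁ x) with hvx_def
  set vy := mulE A₂ (hfun A₁ y) with hvy_def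
  have hhx : ‖hfun A₁ x‖ ≤ R * R := by
    calc ‖hfun A₁ x‖ ≤ ‖mulE A₁ x‖ := relu_norm_le _
      _ ≤ opNorm A₁ * ‖x‖ := mulE_norm_le _ _
      _ ≤ R * R := mul_le_mul hA₁ hx (norm_nonneg x) hR
  have hhy : ‖hfun A₁ y‖ ≤ R * R := by
    calc ‖hfun A₁ y‖ ≤ ‖mulE A₁ y‖ := relu_norm_le _
      _ ≤ opNorm A₁ * ‖y‖ := mulE_norm_le _ _
      _ ≤ R * R := mul_le_mul hA₁ hy (norm_nonneg y) hR
  have hvx3 : ‖vx‖ ≤ R ^ 3 := by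
    calc ‖vx‖ ≤ opNorm A₂ * ‖hfun A₁ x‖ := mulE_norm_le _ _
      _ ≤ R * (R * R) := mul_le_mul hA₂ hhx (norm_nonneg _) hR
      _ = R ^ 3 := by ring
  have hvy3 : ‖vy‖ ≤ R ^ 3 := by
    calc ‖vy‖ ≤ opNorm A₂ * ‖hfun A₁ y‖ := mulE_norm_le _ _
      _ ≤ R * (R * R) := mul_le_mul hA₂ hhy (norm_nonneg _) hR
      _ = R ^ 3 := by ring
  have hvd : ‖vx - vy‖ ≤ R ^ 2 * ‖x - y‖ := by
    calc ‖vx - vy‖ = ‖mulE A₂ (hfun A₁ x - hfun A₁ y)‖ := by rw [mulE_sub]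
      _ ≤ opNorm A₂ * ‖hfun A₁ x - hfun A₁ y‖ := mulE_norm_le _ _
      _ ≤ R * ‖hfun A₁ x - hfun A₁ y‖ :=
          mul_le_mul_of_nonneg_right hA₂ (norm_nonneg _)
      _ ≤ R * ‖mulE A₁ x - mulE A₁ y‖ :=
          mul_le_mul_of_nonneg_left (relu_lip _ _) hR
      _ = R * ‖mulE A₁ (x - y)‖ := by rw [mulE_sub]
      _ ≤ R * (opNorm A₁ * ‖x - y‖) :=
          mul_le_mul_of_nonneg_left (mulE_norm_le _ _) hR
      _ ≤ R * (R * ‖x - y‖) := by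
          apply mul_le_mul_of_nonneg_left _ hR
          exact mul_le_mul_of_nonneg_right hA₁ (norm_nonneg _)
      _ = R ^ 2 * ‖x - y‖ := by ring
  have key : |ax - ay| ≤ (m : ℝ) * (Real.exp (R ^ 3) * (R ^ 2 * ‖x - y‖)) := by
    have hsum : ax - ay = ∑ i, (Real.exp (vx i) - Real.exp (vy i)) := by
      rw [hax_def, hay_def]
      simp only [afun, ufun, vexp, WithLp.ofLp_toLp, Finset.sum_sub_distrib]
      rfl
    rw [hsum]
    calc |∑ i, (Real.exp (vx i) - Real.exp (vy i))|
        ≤ ∑ i, |Real.exp (vx i) - Real.exp (vy i)| := Finset.abs_sum_le_sum_abs _ _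
      _ ≤ ∑ _i : Fin m, Real.exp (R ^ 3) * (R ^ 2 * ‖x - y‖) := by
          apply Finset.sum_le_sum
          intro i _
          have h1 : |vx i| ≤ R ^ 3 := le_trans (coord_abs_le_norm vx i) hvx3
          have h2 : |vy i| ≤ R ^ 3 := le_trans (coord_abs_le_norm vy i) hvy3
          calc |Real.exp (vx i) - Real.exp (vy i)|
              ≤ Real.exp (R ^ 3) * |vx i - vy i| := abs_exp_sub_exp_le h1 h2
            _ ≤ Real.exp (R ^ 3) * (R ^ 2 * ‖x - y‖) := by
                apply mul_le_mul_of_nonneg_left _ (Real.exp_pos _).le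
                have : |vx i - vy i| = |(vx - vy) i| := rfl
                rw [this]
                exact le_trans (coord_abs_le_norm (vx - vy) i) hvd
      _ = (m : ℝ) * (Real.exp (R ^ 3) * (R ^ 2 * ‖x - y‖)) := by
          rw [Finset.sum_const, Finset.card_univ, Fintype.card_fin, nsmul_eq_mul]
  have hmain : |ax⁻¹ - ay⁻¹| ≤
      ((m : ℝ) * (Real.exp (R ^ 3) * (R ^ 2 * ‖x - y‖))) / β ^ 2 := by
    rw [inv_sub_inv haxpos.ne' haypos.ne', abs_div, abs_of_pos (mul_pos haxpos haypos)]
    apply div_le_div₀ (by positivity) _ (by positivity)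
    · calc β ^ 2 = β * β := sq β
        _ ≤ ax * ay := mul_le_mul hax hay hβ.le haxpos.le
    · rw [abs_sub_comm]; exact key
  have hsq : 1 ≤ Real.sqrt ((n : ℝ) * d) := by
    rw [show (1:ℝ) = Real.sqrt 1 from (Real.sqrt_one).symm]
    apply Real.sqrt_le_sqrt
    have h1 : (1:ℝ) ≤ (n:ℝ) := by exact_mod_cast hn
    have h2 : (1:ℝ) ≤ (d:ℝ) := by exact_mod_cast hd
    nlinarith
  have hC : (0:ℝ) ≤ ((m : ℝ) * (Real.exp (R ^ 3) * (R ^ 2 * ‖x - y‖))) / β ^ 2 := by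
    positivity
  calc |ax⁻¹ - ay⁻¹| ≤ ((m : ℝ) * (Real.exp (R ^ 3) * (R ^ 2 * ‖x - y‖))) / β ^ 2 := hmain
    _ ≤ Real.sqrt ((n : ℝ) * d) *
        (((m : ℝ) * (Real.exp (R ^ 3) * (R ^ 2 * ‖x - y‖))) / β ^ 2) :=
          le_mul_of_one_le_left hC hsq
    _ = R ^ 2 * (β ^ 2)⁻¹ * (m : ℝ) * Real.sqrt ((n : ℝ) * d) * Real.exp (R ^ 3)
          * ‖x - y‖ := by
        field_simp

end
end

section
/- Suppose ‖A₁‖ ≤ R, ‖A₂‖ ≤ R, ‖b‖₂ ≤ 1 and R > 4. Let x, y ∈ ℝ^d with ‖x‖₂ ≤ R, ‖y‖₂ ≤ R, and suppose 1[A₁x] = 1[A₁y] (the ReLU activation pattern does not change). Define the d×d matrix H(x) := A₁ᵀ · diag(1[A₁x]) · A₂ᵀ · B(x) · A₂ · diag(1[A₁x]) · A₁ (which is the Hessian of the loss L). Then ‖H(x) − H(y)‖ ≤ m^{3/2} √(nd) exp(5R³) · ‖x − y‖₂. -/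
open Matrix BigOperators

noncomputable section

variable {n m d : ℕ}

/-! ### Auxiliary lemmas -/

section AuxLemmas

lemma mulE_eq {k l : ℕ} (A : Matrix (Fin k) (Fin l) ℝ) (v : EuclideanSpace ℝ (Fin l)) :
    mulE A v = Matrix.toEuclideanLin A v := by
  ext i
  simp [mulE, Matrix.toEuclideanLin_apply, Matrix.mulVec, dotProduct]

lemma norm_mulE_le {k l : ℕ} (A : Matrix (Fin k) (Fin l) ℝ) (v : EuclideanSpace ℝ (Fin l)) :
    ‖mulE A v‖ ≤ opNorm A * ‖v‖ := by
  rw [mulE_eq]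
  exact (LinearMap.toContinuousLinearMap (Matrix.toEuclideanLin A)).le_opNorm v

lemma opNorm_le_of_forall {k l : ℕ} (A : Matrix (Fin k) (Fin l) ℝ) (C : ℝ) (hC : 0 ≤ C)
    (h : ∀ v, ‖mulE A v‖ ≤ C * ‖v‖) : opNorm A ≤ C := by
  apply ContinuousLinearMap.opNorm_le_bound _ hC
  intro v
  simpa [mulE_eq] using h v

lemma mulE_mulmat {k l r : ℕ} (A : Matrix (Fin k) (Fin l) ℝ) (B : Matrix (Fin l) (Fin r) ℝ)
    (v : EuclideanSpace ℝ (Fin r)) : mulE (A * B) v = mulE A (mulE B v) := by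
  ext i
  simp only [mulE, PiLp.toLp_apply, Matrix.mul_apply, Finset.sum_mul, Finset.mul_sum, mul_assoc]
  rw [Finset.sum_comm]

lemma mulE_sub_vec {k l : ℕ} (A : Matrix (Fin k) (Fin l) ℝ)
    (p q : EuclideanSpace ℝ (Fin l)) : mulE A (p - q) = mulE A p - mulE A q := by
  ext i
  have h : ∀ j, (p - q) j = p j - q j := fun j => rfl
  have h2 : (mulE A p - mulE A q) i = mulE A p i - mulE A q i := rfl
  rw [h2]
  simp only [mulE, PiLp.toLp_apply, h, mul_sub, Finset.sum_sub_distrib]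

lemma opNorm_mul_le {k l r : ℕ} (A : Matrix (Fin k) (Fin l) ℝ) (B : Matrix (Fin l) (Fin r) ℝ) :
    opNorm (A * B) ≤ opNorm A * opNorm B := by
  apply opNorm_le_of_forall _ _ (mul_nonneg (opNorm_nonneg A) (opNorm_nonneg B))
  intro v
  rw [mulE_mulmat]
  calc ‖mulE A (mulE B v)‖ ≤ opNorm A * ‖mulE B v‖ := norm_mulE_le A _
    _ ≤ opNorm A * (opNorm B * ‖v‖) :=
        mul_le_mul_of_nonneg_left (norm_mulE_le B v) (opNorm_nonneg A)
    _ = opNorm A * opNorm B * ‖v‖ := by ring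

lemma norm_eq' {k : ℕ} (z : EuclideanSpace ℝ (Fin k)) : ‖z‖ = Real.sqrt (∑ i, (z i) ^ 2) := by
  rw [EuclideanSpace.norm_eq]; simp [Real.norm_eq_abs, sq_abs]

lemma entry_le_norm {k : ℕ} (z : EuclideanSpace ℝ (Fin k)) (i : Fin k) : |z i| ≤ ‖z‖ := by
  rw [EuclideanSpace.norm_eq]
  rw [← Real.sqrt_sq_eq_abs]
  apply Real.sqrt_le_sqrt
  rw [← sq_abs]
  exact Finset.single_le_sum (f := fun j => ‖z j‖ ^ 2) (fun j _ => by positivity)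
    (Finset.mem_univ i)

lemma norm_le_norm_of_abs_le {k : ℕ} (z w : EuclideanSpace ℝ (Fin k))
    (h : ∀ i, |z i| ≤ |w i|) : ‖z‖ ≤ ‖w‖ := by
  rw [EuclideanSpace.norm_eq, EuclideanSpace.norm_eq]
  apply Real.sqrt_le_sqrt
  apply Finset.sum_le_sum
  intro i _
  simp only [Real.norm_eq_abs]
  exact pow_le_pow_left₀ (abs_nonneg _) (h i) 2

lemma opNorm_le_frobenius {k l : ℕ} (A : Matrix (Fin k) (Fin l) ℝ) :
    opNorm A ≤ Real.sqrt (∑ i, ∑ j, (A i j) ^ 2) := by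
  apply opNorm_le_of_forall _ _ (Real.sqrt_nonneg _)
  intro v
  rw [norm_eq' (mulE A v), norm_eq' v, ← Real.sqrt_mul (by positivity)]
  apply Real.sqrt_le_sqrt
  have key : ∀ i, (mulE A v i) ^ 2 ≤ (∑ j, (A i j) ^ 2) * (∑ j, (v j) ^ 2) := by
    intro i
    simpa [mulE] using Finset.sum_mul_sq_le_sq_mul_sq Finset.univ (fun j => A i j) (fun j => v j)
  calc ∑ i, (mulE A v i) ^ 2 ≤ ∑ i, (∑ j, (A i j) ^ 2) * (∑ j, (v j) ^ 2) :=
        Finset.sum_le_sum (fun i _ => key i)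
    _ = (∑ i, ∑ j, (A i j) ^ 2) * ∑ j, (v j) ^ 2 := by rw [Finset.sum_mul]

lemma opNorm_transpose_le {k l : ℕ} (A : Matrix (Fin k) (Fin l) ℝ) :
    opNorm Aᵀ ≤ opNorm A := by
  apply opNorm_le_of_forall _ _ (opNorm_nonneg A)
  intro u
  set g := mulE Aᵀ u with hg
  rcases eq_or_lt_of_le (norm_nonneg g) with h0 | h0
  · rw [← h0]; exact mul_nonneg (opNorm_nonneg A) (norm_nonneg u)
  have hgj : ∀ j, g j = ∑ i, A i j * u i := by
    intro j; simp [hg, mulE, Matrix.transpose_apply]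
  have key : ‖g‖ ^ 2 ≤ ‖u‖ * ‖mulE A g‖ := by
    have h1 : ‖g‖ ^ 2 = ∑ i, u i * mulE A g i := by
      rw [norm_eq', Real.sq_sqrt (by positivity)]
      calc ∑ j, (g j) ^ 2 = ∑ j, ∑ i, u i * (A i j * g j) := by
            apply Finset.sum_congr rfl; intro j _
            rw [sq, hgj j, Finset.sum_mul]
            apply Finset.sum_congr rfl; intro i _; ring
        _ = ∑ i, ∑ j, u i * (A i j * g j) := Finset.sum_comm
        _ = ∑ i, u i * mulE A g i := by
            apply Finset.sum_congr rfl; intro i _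
            rw [mulE, Finset.mul_sum]
    rw [h1]
    have h2 := real_inner_le_norm u (mulE A g)
    rw [PiLp.inner_apply] at h2
    simpa [RCLike.inner_apply, conj_trivial, mul_comm] using h2
  have h2 : ‖mulE A g‖ ≤ opNorm A * ‖g‖ := norm_mulE_le A g
  nlinarith [norm_nonneg u, opNorm_nonneg A, norm_nonneg (mulE A g)]

-- scalar helpers
lemma exp_lip {a b C : ℝ} (ha : a ≤ C) (hb : b ≤ C) :
    |Real.exp a - Real.exp b| ≤ Real.exp C * |a - b| := by
  wlog h : b ≤ a generalizing a b
  · rw [abs_sub_comm, abs_sub_comm a b]; exact this hb ha (le_of_not_ge h)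
  rw [abs_of_nonneg (sub_nonneg.2 (Real.exp_le_exp.2 h)), abs_of_nonneg (sub_nonneg.2 h)]
  have h1 := Real.add_one_le_exp (b - a)
  have h2 : Real.exp a ≤ Real.exp C := Real.exp_le_exp.2 ha
  have h3 : Real.exp b = Real.exp a * Real.exp (b - a) := by
    rw [← Real.exp_add]; ring_nf
  nlinarith [Real.exp_pos a, sub_nonneg.2 h]

lemma absmul {u v U V : ℝ} (h1 : |u| ≤ U) (h2 : |v| ≤ V) : |u * v| ≤ U * V := by
  rw [abs_mul]; exact mul_le_mul h1 h2 (abs_nonneg v) ((abs_nonneg u).trans h1)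

lemma prod2_diff {a a' b b' A B da db : ℝ} (ha : |a| ≤ A) (hb' : |b'| ≤ B)
    (hda : |a - a'| ≤ da) (hdb : |b - b'| ≤ db) :
    |a * b - a' * b'| ≤ A * db + B * da := by
  have key : a * b - a' * b' = a * (b - b') + (a - a') * b' := by ring
  rw [key]
  calc |a * (b - b') + (a - a') * b'| ≤ |a * (b - b')| + |(a - a') * b'| := abs_add_le _ _
    _ ≤ A * db + da * B := add_le_add (absmul ha hdb) (absmul hda hb')
    _ = A * db + B * da := by ring

lemma prod3_diff {a a' b b' c c' A B C da db dc : ℝ}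
    (ha' : |a'| ≤ A) (hb : |b| ≤ B) (hb' : |b'| ≤ B) (hc : |c| ≤ C)
    (hda : |a - a'| ≤ da) (hdb : |b - b'| ≤ db) (hdc : |c - c'| ≤ dc) :
    |a * (b * c) - a' * (b' * c')| ≤ B * C * da + A * C * db + A * B * dc := by
  have key : a * (b * c) - a' * (b' * c') =
      (a - a') * (b * c) + (b - b') * (a' * c) + (c - c') * (a' * b') := by ring
  rw [key]
  calc |(a - a') * (b * c) + (b - b') * (a' * c) + (c - c') * (a' * b')|
      ≤ |(a - a') * (b * c)| + |(b - b') * (a' * c)| + |(c - c') * (a' * b')| :=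
        abs_add_three _ _ _
    _ ≤ da * (B * C) + db * (A * C) + dc * (A * B) :=
        add_le_add (add_le_add (absmul hda (absmul hb hc)) (absmul hdb (absmul ha' hc)))
          (absmul hdc (absmul ha' hb'))
    _ = B * C * da + A * C * db + A * B * dc := by ring

lemma abs5 (p q r s t : ℝ) : |p - q - r + s - t| ≤ |p| + |q| + |r| + |s| + |t| := by
  have h1 : |p - q| ≤ |p| + |q| := abs_sub p q
  have h2 : |p - q - r| ≤ |p - q| + |r| := abs_sub _ r
  have h3 : |p - q - r + s| ≤ |p - q - r| + |s| := abs_add_le _ _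
  have h4 : |p - q - r + s - t| ≤ |p - q - r + s| + |t| := abs_sub _ t
  linarith

lemma num_ineq {R : ℝ} (hR : 4 < R) : 88 * R ^ 6 ≤ Real.exp (3 * R ^ 3) := by
  have hR0 : (0:ℝ) < R := by linarith
  have ht : 64 ≤ R ^ 3 := by nlinarith [sq_nonneg (R - 4), sq_nonneg R]
  set t := R ^ 3 with hts
  have h1 : 3 * t / 4 + 1 ≤ Real.exp (3 * t / 4) := by
    have := Real.add_one_le_exp (3 * t / 4); linarith
  have h2 : Real.exp (3 * t) = Real.exp (3 * t / 4) ^ 4 := by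
    rw [← Real.exp_nat_mul]; norm_num; ring
  have h3 : (3 * t / 4 + 1) ^ 4 ≤ Real.exp (3 * t / 4) ^ 4 :=
    pow_le_pow_left₀ (by linarith) h1 4
  have h4 : 88 * t ^ 2 ≤ (3 * t / 4 + 1) ^ 4 := by nlinarith [sq_nonneg t, sq_nonneg (t - 64)]
  have h6 : R ^ 6 = t ^ 2 := by rw [hts]; ring
  rw [h6]; linarith

-- facts about the softmax-type functions
lemma afun_eq (A₁ : Matrix (Fin n) (Fin d) ℝ) (A₂ : Matrix (Fin m) (Fin n) ℝ)
    (x : EuclideanSpace ℝ (Fin d)) :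
    afun A₁ A₂ x = ∑ i, Real.exp (mulE A₂ (hfun A₁ x) i) := by
  simp [afun, ufun, vexp]

lemma afun_pos (hm : 0 < m) (A₁ : Matrix (Fin n) (Fin d) ℝ) (A₂ : Matrix (Fin m) (Fin n) ℝ)
    (x : EuclideanSpace ℝ (Fin d)) : 0 < afun A₁ A₂ x := by
  haveI : Nonempty (Fin m) := ⟨⟨0, hm⟩⟩
  rw [afun_eq]
  exact Finset.sum_pos (fun i _ => Real.exp_pos _) Finset.univ_nonempty

lemma ffun_apply' (A₁ : Matrix (Fin n) (Fin d) ℝ) (A₂ : Matrix (Fin m) (Fin n) ℝ)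
    (x : EuclideanSpace ℝ (Fin d)) (i : Fin m) :
    ffun A₁ A₂ x i = (afun A₁ A₂ x)⁻¹ * Real.exp (mulE A₂ (hfun A₁ x) i) := rfl

lemma Bmat_apply (A₁ : Matrix (Fin n) (Fin d) ℝ) (A₂ : Matrix (Fin m) (Fin n) ℝ)
    (b : EuclideanSpace ℝ (Fin m)) (x : EuclideanSpace ℝ (Fin d)) (i j : Fin m) :
    Bmat A₁ A₂ b x i j =
      (if i = j then ffun A₁ A₂ x i * (ffun A₁ A₂ x i + cfun A₁ A₂ b x i) else 0)
      - ffun A₁ A₂ x i * ((cfun A₁ A₂ b x i + ffun A₁ A₂ x i) * ffun A₁ A₂ x j)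
      - ffun A₁ A₂ x i * ((cfun A₁ A₂ b x j + ffun A₁ A₂ x j) * ffun A₁ A₂ x j)
      + (∑ k, (2 * cfun A₁ A₂ b x k + ffun A₁ A₂ x k) * ffun A₁ A₂ x k)
          * (ffun A₁ A₂ x i * ffun A₁ A₂ x j)
      - (if i = j then (∑ k, cfun A₁ A₂ b x k * ffun A₁ A₂ x k) * ffun A₁ A₂ x i else 0) := by
  simp only [Bmat, Matrix.sub_apply, Matrix.add_apply, Matrix.smul_apply, Matrix.diagonal_mul,
    Matrix.mul_diagonal, Matrix.vecMulVec_apply, Matrix.diagonal_apply, smul_eq_mul]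
  by_cases hij : i = j <;> simp [hij] <;> ring

end AuxLemmas
set_option maxHeartbeats 1000000 in
/-- Lipschitzness of the Hessian
H(x) = A₁ᵀ diag(1[A₁x]) A₂ᵀ B(x) A₂ diag(1[A₁x]) A₁ under a fixed ReLU activation
pattern: ‖H(x) − H(y)‖ ≤ m^{3/2} √(nd) exp(5R³) ‖x − y‖₂. -/
theorem statement11 (n m d : ℕ) (hn : 0 < n) (hm : 0 < m) (hd : 0 < d) (R : ℝ)
    (A₁ : Matrix (Fin n) (Fin d) ℝ) (A₂ : Matrix (Fin m) (Fin n) ℝ)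
    (b : EuclideanSpace ℝ (Fin m))
    (hA₁ : opNorm A₁ ≤ R) (hA₂ : opNorm A₂ ≤ R) (hb : ‖b‖ ≤ 1) (hR : 4 < R)
    (x y : EuclideanSpace ℝ (Fin d)) (hx : ‖x‖ ≤ R) (hy : ‖y‖ ≤ R)
    (hind : ind (mulE A₁ x) = ind (mulE A₁ y)) :
    opNorm
      ((A₁ᵀ * Matrix.diagonal (ind (mulE A₁ x)) * A₂ᵀ * Bmat A₁ A₂ b x
          * A₂ * Matrix.diagonal (ind (mulE A₁ x)) * A₁)
        - (A₁ᵀ * Matrix.diagonal (ind (mulE A₁ y)) * A₂ᵀ * Bmat A₁ A₂ b y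
          * A₂ * Matrix.diagonal (ind (mulE A₁ y)) * A₁)) ≤
      ((m : ℝ) * Real.sqrt m) * Real.sqrt ((n : ℝ) * d) * Real.exp (5 * R ^ 3)
        * ‖x - y‖ := by
  haveI : Nonempty (Fin m) := ⟨⟨0, hm⟩⟩
  have hR0 : (0:ℝ) < R := by linarith
  have hm0 : (0:ℝ) < m := by exact_mod_cast hm
  set δ : ℝ := ‖x - y‖ with hδdef
  have hδ0 : (0:ℝ) ≤ δ := norm_nonneg _
  set vx := mulE A₂ (hfun A₁ x) with hvxdef
  set vy := mulE A₂ (hfun A₁ y) with hvydef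
  -- norm bounds on h and v
  have hrelu_le : ∀ z : EuclideanSpace ℝ (Fin d), ‖hfun A₁ z‖ ≤ ‖mulE A₁ z‖ := by
    intro z
    apply norm_le_norm_of_abs_le
    intro i
    show |max 0 (mulE A₁ z i)| ≤ |mulE A₁ z i|
    rw [abs_of_nonneg (le_max_left 0 _)]
    exact max_le (abs_nonneg _) (le_abs_self _)
  have hnx : ‖hfun A₁ x‖ ≤ R * R :=
    (hrelu_le x).trans ((norm_mulE_le A₁ x).trans
      (mul_le_mul hA₁ hx (norm_nonneg x) hR0.le))
  have hny : ‖hfun A₁ y‖ ≤ R * R :=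
    (hrelu_le y).trans ((norm_mulE_le A₁ y).trans
      (mul_le_mul hA₁ hy (norm_nonneg y) hR0.le))
  have hvxn : ‖vx‖ ≤ R ^ 3 := by
    rw [hvxdef]
    calc ‖mulE A₂ (hfun A₁ x)‖ ≤ opNorm A₂ * ‖hfun A₁ x‖ := norm_mulE_le _ _
      _ ≤ R * (R * R) := mul_le_mul hA₂ hnx (norm_nonneg _) hR0.le
      _ = R ^ 3 := by ring
  have hvyn : ‖vy‖ ≤ R ^ 3 := by
    rw [hvydef]
    calc ‖mulE A₂ (hfun A₁ y)‖ ≤ opNorm A₂ * ‖hfun A₁ y‖ := norm_mulE_le _ _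
      _ ≤ R * (R * R) := mul_le_mul hA₂ hny (norm_nonneg _) hR0.le
      _ = R ^ 3 := by ring
  have hvxi : ∀ i, |vx i| ≤ R ^ 3 := fun i => (entry_le_norm vx i).trans hvxn
  have hvyi : ∀ i, |vy i| ≤ R ^ 3 := fun i => (entry_le_norm vy i).trans hvyn
  -- the partition sums
  set Sx := afun A₁ A₂ x with hSxdef
  set Sy := afun A₁ A₂ y with hSydef
  have hSx_eq : Sx = ∑ i, Real.exp (vx i) := by rw [hSxdef, hvxdef]; exact afun_eq A₁ A₂ x
  have hSy_eq : Sy = ∑ i, Real.exp (vy i) := by rw [hSydef, hvydef]; exact afun_eq A₁ A₂ y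
  have hSx_pos : 0 < Sx := by rw [hSxdef]; exact afun_pos hm A₁ A₂ x
  have hSy_pos : 0 < Sy := by rw [hSydef]; exact afun_pos hm A₁ A₂ y
  have hSx_lb : (m:ℝ) * Real.exp (-(R ^ 3)) ≤ Sx := by
    rw [hSx_eq]
    calc (m:ℝ) * Real.exp (-(R ^ 3)) = ∑ _i : Fin m, Real.exp (-(R ^ 3)) := by
          rw [Finset.sum_const]; simp [nsmul_eq_mul]
      _ ≤ ∑ i, Real.exp (vx i) :=
          Finset.sum_le_sum fun i _ => Real.exp_le_exp.2 (abs_le.1 (hvxi i)).1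
  -- the softmax vectors
  set fx := ffun A₁ A₂ x with hfxdef
  set fy := ffun A₁ A₂ y with hfydef
  have hfx_eq : ∀ i, fx i = Sx⁻¹ * Real.exp (vx i) := by
    intro i; rw [hfxdef, hSxdef, hvxdef]; exact ffun_apply' A₁ A₂ x i
  have hfy_eq : ∀ i, fy i = Sy⁻¹ * Real.exp (vy i) := by
    intro i; rw [hfydef, hSydef, hvydef]; exact ffun_apply' A₁ A₂ y i
  have hfx0 : ∀ i, 0 ≤ fx i := fun i => by
    rw [hfx_eq i]; exact mul_nonneg (inv_nonneg.2 hSx_pos.le) (Real.exp_pos _).le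
  have hfy0 : ∀ i, 0 ≤ fy i := fun i => by
    rw [hfy_eq i]; exact mul_nonneg (inv_nonneg.2 hSy_pos.le) (Real.exp_pos _).le
  have hexp_le_Sx : ∀ i, Real.exp (vx i) ≤ Sx := fun i => by
    rw [hSx_eq]
    exact Finset.single_le_sum (fun j _ => (Real.exp_pos (vx j)).le) (Finset.mem_univ i)
  have hexp_le_Sy : ∀ i, Real.exp (vy i) ≤ Sy := fun i => by
    rw [hSy_eq]
    exact Finset.single_le_sum (fun j _ => (Real.exp_pos (vy j)).le) (Finset.mem_univ i)
  have hfx1 : ∀ i, fx i ≤ 1 := by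
    intro i
    rw [hfx_eq i]
    calc Sx⁻¹ * Real.exp (vx i) ≤ Sx⁻¹ * Sx :=
          mul_le_mul_of_nonneg_left (hexp_le_Sx i) (inv_nonneg.2 hSx_pos.le)
      _ = 1 := inv_mul_cancel₀ hSx_pos.ne'
  have hfy1 : ∀ i, fy i ≤ 1 := by
    intro i
    rw [hfy_eq i]
    calc Sy⁻¹ * Real.exp (vy i) ≤ Sy⁻¹ * Sy :=
          mul_le_mul_of_nonneg_left (hexp_le_Sy i) (inv_nonneg.2 hSy_pos.le)
      _ = 1 := inv_mul_cancel₀ hSy_pos.ne'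
  have hfxa : ∀ i, |fx i| ≤ 1 := fun i => abs_le.2 ⟨by linarith [hfx0 i], hfx1 i⟩
  have hfya : ∀ i, |fy i| ≤ 1 := fun i => abs_le.2 ⟨by linarith [hfy0 i], hfy1 i⟩
  have hsumfx : ∑ i, fx i = 1 := by
    calc ∑ i, fx i = ∑ i, Sx⁻¹ * Real.exp (vx i) := Finset.sum_congr rfl fun i _ => hfx_eq i
      _ = Sx⁻¹ * ∑ i, Real.exp (vx i) := by rw [Finset.mul_sum]
      _ = Sx⁻¹ * Sx := by rw [← hSx_eq]
      _ = 1 := inv_mul_cancel₀ hSx_pos.ne'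
  have hsumfy : ∑ i, fy i = 1 := by
    calc ∑ i, fy i = ∑ i, Sy⁻¹ * Real.exp (vy i) := Finset.sum_congr rfl fun i _ => hfy_eq i
      _ = Sy⁻¹ * ∑ i, Real.exp (vy i) := by rw [Finset.mul_sum]
      _ = Sy⁻¹ * Sy := by rw [← hSy_eq]
      _ = 1 := inv_mul_cancel₀ hSy_pos.ne'
  -- E and T
  set E := ∑ i, |fx i - fy i| with hEdef
  have hE0 : 0 ≤ E := Finset.sum_nonneg fun i _ => abs_nonneg _
  have hεE : ∀ i, |fx i - fy i| ≤ E := fun i =>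
    Finset.single_le_sum (f := fun j => |fx j - fy j|) (fun j _ => abs_nonneg _)
      (Finset.mem_univ i)
  set T := ∑ i, |vx i - vy i| with hTdef
  have hT0 : 0 ≤ T := Finset.sum_nonneg fun i _ => abs_nonneg _
  have hSd : |Sx - Sy| ≤ Real.exp (R ^ 3) * T := by
    rw [hSx_eq, hSy_eq, ← Finset.sum_sub_distrib]
    calc |∑ i, (Real.exp (vx i) - Real.exp (vy i))|
        ≤ ∑ i, |Real.exp (vx i) - Real.exp (vy i)| := Finset.abs_sum_le_sum_abs _ _
      _ ≤ ∑ i, Real.exp (R ^ 3) * |vx i - vy i| :=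
          Finset.sum_le_sum fun i _ => exp_lip (abs_le.1 (hvxi i)).2 (abs_le.1 (hvyi i)).2
      _ = Real.exp (R ^ 3) * T := by rw [hTdef, Finset.mul_sum]
  have hrep : ∀ i, fx i - fy i =
      ((Real.exp (vx i) - Real.exp (vy i)) + fy i * (Sy - Sx)) / Sx := by
    intro i
    rw [hfx_eq i, hfy_eq i]
    field_simp
    ring
  have hepsi : ∀ i, |fx i - fy i| ≤
      (Real.exp (R ^ 3) * |vx i - vy i| + fy i * |Sx - Sy|) / Sx := by
    intro i
    rw [hrep i, abs_div, abs_of_pos hSx_pos]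
    have hnum : |(Real.exp (vx i) - Real.exp (vy i)) + fy i * (Sy - Sx)| ≤
        Real.exp (R ^ 3) * |vx i - vy i| + fy i * |Sx - Sy| := by
      calc |(Real.exp (vx i) - Real.exp (vy i)) + fy i * (Sy - Sx)|
          ≤ |Real.exp (vx i) - Real.exp (vy i)| + |fy i * (Sy - Sx)| := abs_add_le _ _
        _ ≤ Real.exp (R ^ 3) * |vx i - vy i| + fy i * |Sx - Sy| := by
            apply add_le_add (exp_lip (abs_le.1 (hvxi i)).2 (abs_le.1 (hvyi i)).2)
            rw [abs_mul, abs_of_nonneg (hfy0 i), abs_sub_comm]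
    rw [div_eq_mul_inv, div_eq_mul_inv]
    exact mul_le_mul_of_nonneg_right hnum (inv_nonneg.2 hSx_pos.le)
  have hE2 : E ≤ 2 * Real.exp (R ^ 3) * T / Sx := by
    have hEle : E ≤ (Real.exp (R ^ 3) * T + |Sx - Sy|) / Sx := by
      rw [hEdef]
      calc ∑ i, |fx i - fy i|
          ≤ ∑ i, (Real.exp (R ^ 3) * |vx i - vy i| + fy i * |Sx - Sy|) / Sx :=
            Finset.sum_le_sum fun i _ => hepsi i
        _ = (∑ i, (Real.exp (R ^ 3) * |vx i - vy i| + fy i * |Sx - Sy|)) / Sx := by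
            rw [Finset.sum_div]
        _ = (Real.exp (R ^ 3) * T + |Sx - Sy|) / Sx := by
            rw [Finset.sum_add_distrib, ← Finset.mul_sum, ← Finset.sum_mul, hsumfy, one_mul,
              hTdef]
    have hnum2 : Real.exp (R ^ 3) * T + |Sx - Sy| ≤ 2 * Real.exp (R ^ 3) * T := by
      linarith [hSd]
    calc E ≤ (Real.exp (R ^ 3) * T + |Sx - Sy|) / Sx := hEle
      _ ≤ 2 * Real.exp (R ^ 3) * T / Sx := by
          rw [div_eq_mul_inv, div_eq_mul_inv]
          exact mul_le_mul_of_nonneg_right hnum2 (inv_nonneg.2 hSx_pos.le)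
  -- bound on T
  have hhd : ‖hfun A₁ x - hfun A₁ y‖ ≤ R * δ := by
    have h1 : ∀ i, |(hfun A₁ x - hfun A₁ y) i| ≤ |mulE A₁ (x - y) i| := by
      intro i
      have hsub : (hfun A₁ x - hfun A₁ y) i = max 0 (mulE A₁ x i) - max 0 (mulE A₁ y i) := rfl
      have hsub2 : mulE A₁ (x - y) i = mulE A₁ x i - mulE A₁ y i := by
        rw [mulE_sub_vec]; rfl
      rw [hsub, hsub2, max_comm 0 (mulE A₁ x i), max_comm 0 (mulE A₁ y i)]
      exact abs_max_sub_max_le_abs _ _ _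
    calc ‖hfun A₁ x - hfun A₁ y‖ ≤ ‖mulE A₁ (x - y)‖ := norm_le_norm_of_abs_le _ _ h1
      _ ≤ opNorm A₁ * δ := by rw [hδdef]; exact norm_mulE_le _ _
      _ ≤ R * δ := mul_le_mul_of_nonneg_right hA₁ hδ0
  have hdvn : ‖vx - vy‖ ≤ R * (R * δ) := by
    have hvv : vx - vy = mulE A₂ (hfun A₁ x - hfun A₁ y) := by
      rw [mulE_sub_vec, ← hvxdef, ← hvydef]
    rw [hvv]
    calc ‖mulE A₂ (hfun A₁ x - hfun A₁ y)‖ ≤ opNorm A₂ * ‖hfun A₁ x - hfun A₁ y‖ :=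
          norm_mulE_le _ _
      _ ≤ R * (R * δ) := mul_le_mul hA₂ hhd (norm_nonneg _) hR0.le
  have hTle : T ≤ (m:ℝ) * (R * (R * δ)) := by
    rw [hTdef]
    calc ∑ i, |vx i - vy i| ≤ ∑ _i : Fin m, ‖vx - vy‖ := by
          apply Finset.sum_le_sum; intro i _
          have hvi : vx i - vy i = (vx - vy) i := rfl
          rw [hvi]; exact entry_le_norm _ i
      _ = (m:ℝ) * ‖vx - vy‖ := by rw [Finset.sum_const]; simp [nsmul_eq_mul]
      _ ≤ (m:ℝ) * (R * (R * δ)) := mul_le_mul_of_nonneg_left hdvn hm0.le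
  -- final bound on E
  have hSxinv : Sx⁻¹ ≤ Real.exp (R ^ 3) / m := by
    have h1 : (0:ℝ) < (m:ℝ) * Real.exp (-(R ^ 3)) := by positivity
    have h2 : Sx⁻¹ ≤ ((m:ℝ) * Real.exp (-(R ^ 3)))⁻¹ := inv_anti₀ h1 hSx_lb
    rw [Real.exp_neg] at h2
    calc Sx⁻¹ ≤ ((m:ℝ) * (Real.exp (R ^ 3))⁻¹)⁻¹ := h2
      _ = Real.exp (R ^ 3) / m := by rw [mul_inv, inv_inv]; ring
  have hEfin : E ≤ 2 * Real.exp (2 * R ^ 3) * (R * R) * δ := by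
    calc E ≤ 2 * Real.exp (R ^ 3) * T / Sx := hE2
      _ = (2 * Real.exp (R ^ 3) * T) * Sx⁻¹ := div_eq_mul_inv _ _
      _ ≤ (2 * Real.exp (R ^ 3) * ((m:ℝ) * (R * (R * δ)))) * (Real.exp (R ^ 3) / m) := by
          apply mul_le_mul _ hSxinv (inv_nonneg.2 hSx_pos.le) (by positivity)
          exact mul_le_mul_of_nonneg_left hTle (by positivity)
      _ = 2 * (Real.exp (R ^ 3) * Real.exp (R ^ 3)) * (R * R) * δ * ((m:ℝ) * (m:ℝ)⁻¹) := by
          ring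
      _ = 2 * Real.exp (2 * R ^ 3) * (R * R) * δ := by
          rw [mul_inv_cancel₀ hm0.ne', ← Real.exp_add, ← two_mul, mul_one]
  -- entrywise facts about c
  set cx := cfun A₁ A₂ b x with hcxdef
  set cy := cfun A₁ A₂ b y with hcydef
  have hcx_eq : ∀ i, cx i = fx i - b i := fun i => rfl
  have hcy_eq : ∀ i, cy i = fy i - b i := fun i => rfl
  have hba : ∀ i, |b i| ≤ 1 := fun i => (entry_le_norm b i).trans hb
  have hcxa : ∀ i, |cx i| ≤ 2 := by
    intro i
    rw [hcx_eq i]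
    calc |fx i - b i| ≤ |fx i| + |b i| := abs_sub _ _
      _ ≤ 1 + 1 := add_le_add (hfxa i) (hba i)
      _ = 2 := by norm_num
  have hcya : ∀ i, |cy i| ≤ 2 := by
    intro i
    rw [hcy_eq i]
    calc |fy i - b i| ≤ |fy i| + |b i| := abs_sub _ _
      _ ≤ 1 + 1 := add_le_add (hfya i) (hba i)
      _ = 2 := by norm_num
  have hdc : ∀ i, |cx i - cy i| = |fx i - fy i| := by
    intro i
    have hcc : cx i - cy i = fx i - fy i := by rw [hcx_eq i, hcy_eq i]; ring
    rw [hcc]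
  -- the scalar sums
  set s1x := ∑ i, (2 * cx i + fx i) * fx i with hs1xdef
  set s1y := ∑ i, (2 * cy i + fy i) * fy i with hs1ydef
  set s2x := ∑ i, cx i * fx i with hs2xdef
  set s2y := ∑ i, cy i * fy i with hs2ydef
  have habs2cf : ∀ i, |2 * cx i + fx i| ≤ 5 := by
    intro i
    calc |2 * cx i + fx i| ≤ |2 * cx i| + |fx i| := abs_add_le _ _
      _ ≤ 2 * 2 + 1 := by
          rw [abs_mul, abs_two]
          exact add_le_add (mul_le_mul_of_nonneg_left (hcxa i) (by norm_num)) (hfxa i)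
      _ = 5 := by norm_num
  have habs2cf' : ∀ i, |2 * cy i + fy i| ≤ 5 := by
    intro i
    calc |2 * cy i + fy i| ≤ |2 * cy i| + |fy i| := abs_add_le _ _
      _ ≤ 2 * 2 + 1 := by
          rw [abs_mul, abs_two]
          exact add_le_add (mul_le_mul_of_nonneg_left (hcya i) (by norm_num)) (hfya i)
      _ = 5 := by norm_num
  have hs1ya : |s1y| ≤ 5 := by
    rw [hs1ydef]
    calc |∑ i, (2 * cy i + fy i) * fy i| ≤ ∑ i, |(2 * cy i + fy i) * fy i| :=
          Finset.abs_sum_le_sum_abs _ _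
      _ ≤ ∑ i, 5 * fy i := by
          apply Finset.sum_le_sum; intro i _
          calc |(2 * cy i + fy i) * fy i| = |2 * cy i + fy i| * |fy i| := abs_mul _ _
            _ ≤ 5 * fy i := by
                rw [abs_of_nonneg (hfy0 i)]
                exact mul_le_mul_of_nonneg_right (habs2cf' i) (hfy0 i)
      _ = 5 := by rw [← Finset.mul_sum, hsumfy, mul_one]
  have hs2xa : |s2x| ≤ 2 := by
    rw [hs2xdef]
    calc |∑ i, cx i * fx i| ≤ ∑ i, |cx i * fx i| := Finset.abs_sum_le_sum_abs _ _
      _ ≤ ∑ i, 2 * fx i := by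
          apply Finset.sum_le_sum; intro i _
          calc |cx i * fx i| = |cx i| * |fx i| := abs_mul _ _
            _ ≤ 2 * fx i := by
                rw [abs_of_nonneg (hfx0 i)]
                exact mul_le_mul_of_nonneg_right (hcxa i) (hfx0 i)
      _ = 2 := by rw [← Finset.mul_sum, hsumfx, mul_one]
  have hds1 : |s1x - s1y| ≤ 8 * E := by
    rw [hs1xdef, hs1ydef, ← Finset.sum_sub_distrib]
    calc |∑ i, ((2 * cx i + fx i) * fx i - (2 * cy i + fy i) * fy i)|
        ≤ ∑ i, |(2 * cx i + fx i) * fx i - (2 * cy i + fy i) * fy i| :=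
          Finset.abs_sum_le_sum_abs _ _
      _ ≤ ∑ i, 8 * |fx i - fy i| := by
          apply Finset.sum_le_sum; intro i _
          have h2 : |(2 * cx i + fx i) - (2 * cy i + fy i)| ≤ 3 * |fx i - fy i| := by
            have e1 : (2 * cx i + fx i) - (2 * cy i + fy i) =
                2 * (cx i - cy i) + (fx i - fy i) := by ring
            rw [e1]
            calc |2 * (cx i - cy i) + (fx i - fy i)|
                ≤ |2 * (cx i - cy i)| + |fx i - fy i| := abs_add_le _ _
              _ = 2 * |cx i - cy i| + |fx i - fy i| := by rw [abs_mul, abs_two]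
              _ = 3 * |fx i - fy i| := by rw [hdc i]; ring
          have hkey := prod2_diff (habs2cf i) (hfya i) h2 (le_refl |fx i - fy i|)
          linarith [hkey]
      _ = 8 * E := by rw [hEdef, Finset.mul_sum]
  have hds2 : |s2x - s2y| ≤ 3 * E := by
    rw [hs2xdef, hs2ydef, ← Finset.sum_sub_distrib]
    calc |∑ i, (cx i * fx i - cy i * fy i)| ≤ ∑ i, |cx i * fx i - cy i * fy i| :=
          Finset.abs_sum_le_sum_abs _ _
      _ ≤ ∑ i, 3 * |fx i - fy i| := by
          apply Finset.sum_le_sum; intro i _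
          have h2 : |cx i - cy i| ≤ |fx i - fy i| := le_of_eq (hdc i)
          have hkey := prod2_diff (hcxa i) (hfya i) h2 (le_refl |fx i - fy i|)
          linarith [hkey]
      _ = 3 * E := by rw [hEdef, Finset.mul_sum]
  -- entrywise bound on Bmat difference
  have hcfx : ∀ i, |cx i + fx i| ≤ 3 := by
    intro i
    calc |cx i + fx i| ≤ |cx i| + |fx i| := abs_add_le _ _
      _ ≤ 2 + 1 := add_le_add (hcxa i) (hfxa i)
      _ = 3 := by norm_num
  have hcfy : ∀ i, |cy i + fy i| ≤ 3 := by
    intro i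
    calc |cy i + fy i| ≤ |cy i| + |fy i| := abs_add_le _ _
      _ ≤ 2 + 1 := add_le_add (hcya i) (hfya i)
      _ = 3 := by norm_num
  have hdcf : ∀ i, |(cx i + fx i) - (cy i + fy i)| ≤ 2 * |fx i - fy i| := by
    intro i
    have e1 : (cx i + fx i) - (cy i + fy i) = (cx i - cy i) + (fx i - fy i) := by ring
    rw [e1]
    calc |(cx i - cy i) + (fx i - fy i)| ≤ |cx i - cy i| + |fx i - fy i| := abs_add_le _ _
      _ = 2 * |fx i - fy i| := by rw [hdc i]; ring
  have hBent : ∀ i j, |Bmat A₁ A₂ b x i j - Bmat A₁ A₂ b y i j| ≤ 44 * E := by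
    intro i j
    have hd1 : |fx i * (fx i + cx i) - fy i * (fy i + cy i)| ≤ 5 * E := by
      have h1 : |(fx i + cx i) - (fy i + cy i)| ≤ 2 * |fx i - fy i| := by
        have e1 : (fx i + cx i) - (fy i + cy i) = (cx i + fx i) - (cy i + fy i) := by ring
        rw [e1]; exact hdcf i
      have h2 : |fy i + cy i| ≤ 3 := by
        calc |fy i + cy i| ≤ |fy i| + |cy i| := abs_add_le _ _
          _ ≤ 1 + 2 := add_le_add (hfya i) (hcya i)
          _ = 3 := by norm_num
      have hkey := prod2_diff (hfxa i) h2 (le_refl |fx i - fy i|) h1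
      linarith [hεE i]
    have hd2 : |fx i * ((cx i + fx i) * fx j) - fy i * ((cy i + fy i) * fy j)| ≤ 8 * E := by
      have hkey := prod3_diff (hfya i) (hcfx i) (hcfy i) (hfxa j)
        (le_refl |fx i - fy i|) (hdcf i) (le_refl |fx j - fy j|)
      linarith [hεE i, hεE j]
    have hd3 : |fx i * ((cx j + fx j) * fx j) - fy i * ((cy j + fy j) * fy j)| ≤ 8 * E := by
      have hkey := prod3_diff (hfya i) (hcfx j) (hcfy j) (hfxa j)
        (le_refl |fx i - fy i|) (hdcf j) (le_refl |fx j - fy j|)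
      linarith [hεE i, hεE j]
    have hd4 : |s1x * (fx i * fx j) - s1y * (fy i * fy j)| ≤ 18 * E := by
      have hkey := prod3_diff hs1ya (hfxa i) (hfya i) (hfxa j)
        hds1 (le_refl |fx i - fy i|) (le_refl |fx j - fy j|)
      linarith [hεE i, hεE j]
    have hd5 : |s2x * fx i - s2y * fy i| ≤ 5 * E := by
      have hkey := prod2_diff hs2xa (hfya i) hds2 (le_refl |fx i - fy i|)
      linarith [hεE i]
    have hd1' : |(if i = j then fx i * (fx i + cx i) else 0)
        - (if i = j then fy i * (fy i + cy i) else 0)| ≤ 5 * E := by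
      by_cases hij : i = j
      · simp only [if_pos hij]; exact hd1
      · simp only [if_neg hij, sub_zero, abs_zero]; linarith
    have hd5' : |(if i = j then s2x * fx i else 0)
        - (if i = j then s2y * fy i else 0)| ≤ 5 * E := by
      by_cases hij : i = j
      · simp only [if_pos hij]; exact hd5
      · simp only [if_neg hij, sub_zero, abs_zero]; linarith
    have hgrp : Bmat A₁ A₂ b x i j - Bmat A₁ A₂ b y i j =
        ((if i = j then fx i * (fx i + cx i) else 0)
          - (if i = j then fy i * (fy i + cy i) else 0))
        - (fx i * ((cx i + fx i) * fx j) - fy i * ((cy i + fy i) * fy j))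
        - (fx i * ((cx j + fx j) * fx j) - fy i * ((cy j + fy j) * fy j))
        + (s1x * (fx i * fx j) - s1y * (fy i * fy j))
        - ((if i = j then s2x * fx i else 0) - (if i = j then s2y * fy i else 0)) := by
      rw [Bmat_apply, Bmat_apply, hfxdef, hfydef, hcxdef, hcydef, hs1xdef, hs1ydef,
        hs2xdef, hs2ydef]
      ring
    rw [hgrp]
    refine (abs5 _ _ _ _ _).trans ?_
    linarith [hd1', hd2, hd3, hd4, hd5']
  -- operator norm of the Bmat difference
  have hBop : opNorm (Bmat A₁ A₂ b x - Bmat A₁ A₂ b y) ≤ (m:ℝ) * (44 * E) := by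
    refine (opNorm_le_frobenius _).trans ?_
    have hsum : ∑ i, ∑ j, ((Bmat A₁ A₂ b x - Bmat A₁ A₂ b y) i j) ^ 2 ≤
        (m:ℝ) * m * (44 * E) ^ 2 := by
      calc ∑ i, ∑ j, ((Bmat A₁ A₂ b x - Bmat A₁ A₂ b y) i j) ^ 2
          ≤ ∑ _i : Fin m, ∑ _j : Fin m, (44 * E) ^ 2 := by
            apply Finset.sum_le_sum; intro i _
            apply Finset.sum_le_sum; intro j _
            have h1 : |(Bmat A₁ A₂ b x - Bmat A₁ A₂ b y) i j| ≤ 44 * E := by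
              rw [Matrix.sub_apply]; exact hBent i j
            calc ((Bmat A₁ A₂ b x - Bmat A₁ A₂ b y) i j) ^ 2
                = |(Bmat A₁ A₂ b x - Bmat A₁ A₂ b y) i j| ^ 2 := (sq_abs _).symm
              _ ≤ (44 * E) ^ 2 := pow_le_pow_left₀ (abs_nonneg _) h1 2
        _ = (m:ℝ) * m * (44 * E) ^ 2 := by
            rw [Finset.sum_const, Finset.sum_const]
            simp [nsmul_eq_mul]; ring
    calc Real.sqrt (∑ i, ∑ j, ((Bmat A₁ A₂ b x - Bmat A₁ A₂ b y) i j) ^ 2)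
        ≤ Real.sqrt ((m:ℝ) * m * (44 * E) ^ 2) := Real.sqrt_le_sqrt hsum
      _ = (m:ℝ) * (44 * E) := by
          rw [show (m:ℝ) * m * (44 * E) ^ 2 = ((m:ℝ) * (44 * E)) ^ 2 by ring,
            Real.sqrt_sq (by positivity)]
  -- operator norm of the diagonal indicator matrix
  have hD : opNorm (Matrix.diagonal (ind (mulE A₁ x))) ≤ 1 := by
    apply opNorm_le_of_forall _ _ zero_le_one
    intro v
    rw [one_mul]
    apply norm_le_norm_of_abs_le
    intro i
    have h1 : mulE (Matrix.diagonal (ind (mulE A₁ x))) v i = ind (mulE A₁ x) i * v i := by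
      simp [mulE, Matrix.diagonal_apply, ite_mul, zero_mul]
    rw [h1, ind]
    dsimp only
    split
    · rw [one_mul]
    · rw [zero_mul, abs_zero]; exact abs_nonneg _
  -- assemble
  rw [← hind]
  set D := Matrix.diagonal (ind (mulE A₁ x)) with hDdef
  have hfact : A₁ᵀ * D * A₂ᵀ * Bmat A₁ A₂ b x * A₂ * D * A₁
      - A₁ᵀ * D * A₂ᵀ * Bmat A₁ A₂ b y * A₂ * D * A₁
      = A₁ᵀ * D * A₂ᵀ * (Bmat A₁ A₂ b x - Bmat A₁ A₂ b y) * A₂ * D * A₁ := by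
    rw [Matrix.mul_sub, Matrix.sub_mul, Matrix.sub_mul, Matrix.sub_mul]
  rw [hfact]
  have hA₁t : opNorm A₁ᵀ ≤ R := (opNorm_transpose_le A₁).trans hA₁
  have hA₂t : opNorm A₂ᵀ ≤ R := (opNorm_transpose_le A₂).trans hA₂
  have hBopn : (0:ℝ) ≤ (m:ℝ) * (44 * E) := by positivity
  have h01 : (0:ℝ) ≤ R * 1 := by linarith
  have h02 : (0:ℝ) ≤ R * 1 * R := by nlinarith
  have h03 : (0:ℝ) ≤ R * 1 * R * ((m:ℝ) * (44 * E)) := mul_nonneg h02 hBopn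
  have h04 : (0:ℝ) ≤ R * 1 * R * ((m:ℝ) * (44 * E)) * R := mul_nonneg h03 hR0.le
  have h05 : (0:ℝ) ≤ R * 1 * R * ((m:ℝ) * (44 * E)) * R * 1 := mul_nonneg h04 zero_le_one
  have c1 : opNorm (A₁ᵀ * D) ≤ R * 1 :=
    (opNorm_mul_le _ _).trans (mul_le_mul hA₁t hD (opNorm_nonneg _) hR0.le)
  have c2 : opNorm (A₁ᵀ * D * A₂ᵀ) ≤ R * 1 * R :=
    (opNorm_mul_le _ _).trans (mul_le_mul c1 hA₂t (opNorm_nonneg _) h01)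
  have c3 : opNorm (A₁ᵀ * D * A₂ᵀ * (Bmat A₁ A₂ b x - Bmat A₁ A₂ b y)) ≤
      R * 1 * R * ((m:ℝ) * (44 * E)) :=
    (opNorm_mul_le _ _).trans (mul_le_mul c2 hBop (opNorm_nonneg _) h02)
  have c4 : opNorm (A₁ᵀ * D * A₂ᵀ * (Bmat A₁ A₂ b x - Bmat A₁ A₂ b y) * A₂) ≤
      R * 1 * R * ((m:ℝ) * (44 * E)) * R :=
    (opNorm_mul_le _ _).trans (mul_le_mul c3 hA₂ (opNorm_nonneg _) h03)
  have c5 : opNorm (A₁ᵀ * D * A₂ᵀ * (Bmat A₁ A₂ b x - Bmat A₁ A₂ b y) * A₂ * D) ≤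
      R * 1 * R * ((m:ℝ) * (44 * E)) * R * 1 :=
    (opNorm_mul_le _ _).trans (mul_le_mul c4 hD (opNorm_nonneg _) h04)
  have c6 : opNorm (A₁ᵀ * D * A₂ᵀ * (Bmat A₁ A₂ b x - Bmat A₁ A₂ b y) * A₂ * D * A₁) ≤
      R * 1 * R * ((m:ℝ) * (44 * E)) * R * 1 * R :=
    (opNorm_mul_le _ _).trans (mul_le_mul c5 hA₁ (opNorm_nonneg _) h05)
  refine c6.trans ?_
  -- numeric conclusion
  have hnum := num_ineq hR
  have hsm : (1:ℝ) ≤ Real.sqrt m := by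
    rw [show (1:ℝ) = Real.sqrt 1 by simp]
    exact Real.sqrt_le_sqrt (by exact_mod_cast hm)
  have hsnd : (1:ℝ) ≤ Real.sqrt ((n:ℝ) * d) := by
    rw [show (1:ℝ) = Real.sqrt 1 by simp]
    apply Real.sqrt_le_sqrt
    have hn1 : (1:ℝ) ≤ n := by exact_mod_cast hn
    have hd1 : (1:ℝ) ≤ d := by exact_mod_cast hd
    calc (1:ℝ) = 1 * 1 := (one_mul 1).symm
      _ ≤ (n:ℝ) * d := mul_le_mul hn1 hd1 zero_le_one (zero_le_one.trans hn1)
  have key1 : R * 1 * R * ((m:ℝ) * (44 * E)) * R * 1 * R ≤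
      88 * (m:ℝ) * R ^ 6 * Real.exp (2 * R ^ 3) * δ := by
    have h1 : R * 1 * R * ((m:ℝ) * (44 * E)) * R * 1 * R = 44 * m * R ^ 4 * E := by ring
    rw [h1]
    calc 44 * (m:ℝ) * R ^ 4 * E
        ≤ 44 * (m:ℝ) * R ^ 4 * (2 * Real.exp (2 * R ^ 3) * (R * R) * δ) :=
          mul_le_mul_of_nonneg_left hEfin (by positivity)
      _ = 88 * (m:ℝ) * R ^ 6 * Real.exp (2 * R ^ 3) * δ := by ring
  have key2 : 88 * (m:ℝ) * R ^ 6 * Real.exp (2 * R ^ 3) * δ ≤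
      (m:ℝ) * Real.exp (5 * R ^ 3) * δ := by
    have h4 : Real.exp (3 * R ^ 3) * Real.exp (2 * R ^ 3) = Real.exp (5 * R ^ 3) := by
      rw [← Real.exp_add]; ring_nf
    have h5 : 88 * R ^ 6 * Real.exp (2 * R ^ 3) ≤ Real.exp (5 * R ^ 3) := by
      rw [← h4]
      exact mul_le_mul_of_nonneg_right hnum (Real.exp_pos _).le
    have h6 := mul_le_mul_of_nonneg_left h5 (mul_nonneg hm0.le hδ0)
    calc 88 * (m:ℝ) * R ^ 6 * Real.exp (2 * R ^ 3) * δ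
        = ((m:ℝ) * δ) * (88 * R ^ 6 * Real.exp (2 * R ^ 3)) := by ring
      _ ≤ ((m:ℝ) * δ) * Real.exp (5 * R ^ 3) := h6
      _ = (m:ℝ) * Real.exp (5 * R ^ 3) * δ := by ring
  have key3 : (m:ℝ) * Real.exp (5 * R ^ 3) * δ ≤
      ((m:ℝ) * Real.sqrt m) * Real.sqrt ((n:ℝ) * d) * Real.exp (5 * R ^ 3) * δ := by
    have h1 : (m:ℝ) * Real.exp (5 * R ^ 3) * δ
        = (m:ℝ) * 1 * 1 * Real.exp (5 * R ^ 3) * δ := by ring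
    rw [h1]
    apply mul_le_mul_of_nonneg_right _ hδ0
    apply mul_le_mul_of_nonneg_right _ (Real.exp_pos _).le
    calc (m:ℝ) * 1 * 1 ≤ (m:ℝ) * Real.sqrt m * 1 :=
          mul_le_mul_of_nonneg_right (mul_le_mul_of_nonneg_left hsm hm0.le) zero_le_one
      _ ≤ (m:ℝ) * Real.sqrt m * Real.sqrt ((n:ℝ) * d) :=
          mul_le_mul_of_nonneg_left hsnd (by positivity)
  exact key1.trans (key2.trans key3)

end
end
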